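/- arXiv:1810.01330 — 7 statements merged into one kernel-verified Lean document; each statement's English description precedes it below -/
import Mathlib

section
/- Let ψ be a unit vector in ℂ^d and A a Hermitian d×d complex matrix with Var_ψ(A) > 0. Define B = −i[A, |ψ⟩⟨ψ|] (a Hermitian matrix). Then ⟨ψ, i[A,B] ψ⟩ / ‖B‖ = 2 √(Var_ψ(A)); that is, the lower bound ⟨i[A,B]⟩_ψ / ‖B‖ on √(F(ψ,A)) is tight, where F(ψ,A) = 4 Var_ψ(A) is the quantum Fisher information of the pure state ψ with generator A. -/
/-!
Write `P = |ψ⟩⟨ψ|` and `φ = (A - ⟨A⟩_ψ) ψ`, which is orthogonal to `ψ` and has `‖φ‖² = Var_ψ(A)`.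
Since `A` is Hermitian and `⟨A⟩_ψ` is real, `[A, P] = |φ⟩⟨ψ| - |ψ⟩⟨φ|`. On the orthonormal pair
`ψ, φ/‖φ‖` this operator acts as `‖φ‖` times a rotation and it vanishes on their orthogonal
complement, so `‖B‖ = ‖φ‖`. On the other hand `i[A, B] = [A, [A, P]]`, whose expectation in `ψ`
is `⟨Aψ, φ⟩ + ⟨φ, Aψ⟩ = 2‖φ‖²`. Hence the quotient is `2‖φ‖² / ‖φ‖ = 2 √Var_ψ(A)`.
-/

open Matrix
open scoped Matrix.Norms.L2Operator

/-- Expectation value `⟨ψ, A ψ⟩` (real part) of a matrix `A` in the state `ψ`. -/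
noncomputable def expval {d : ℕ} (A : Matrix (Fin d) (Fin d) ℂ) (ψ : Fin d → ℂ) : ℝ :=
  (star ψ ⬝ᵥ A.mulVec ψ).re

/-- Variance `⟨A²⟩_ψ − ⟨A⟩_ψ²` of a matrix `A` in the state `ψ`. -/
noncomputable def variance {d : ℕ} (A : Matrix (Fin d) (Fin d) ℂ) (ψ : Fin d → ℂ) : ℝ :=
  expval (A * A) ψ - (expval A ψ) ^ 2

open InnerProductSpace ContinuousLinearMap RCLike WithLp
open scoped InnerProductSpace

section Bessel

variable {𝕜 E : Type*} [RCLike 𝕜] [NormedAddCommGroup E] [InnerProductSpace 𝕜 E]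

theorem norm_inner_sq_mul_add_norm_inner_sq_le {u φ : E} (hu : ‖u‖ = 1) (huφ : ⟪u, φ⟫_𝕜 = 0)
    (x : E) : ‖⟪u, x⟫_𝕜‖ ^ 2 * ‖φ‖ ^ 2 + ‖⟪φ, x⟫_𝕜‖ ^ 2 ≤ ‖φ‖ ^ 2 * ‖x‖ ^ 2 := by
  set w := x - ⟪u, x⟫_𝕜 • u
  have hφw : ⟪φ, w⟫_𝕜 = ⟪φ, x⟫_𝕜 := by
    simp [w, inner_sub_right, inner_smul_right, inner_eq_zero_symm.mp huφ]
  have hw : ‖w‖ ^ 2 = ‖x‖ ^ 2 - ‖⟪u, x⟫_𝕜‖ ^ 2 := by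
    rw [norm_sub_sq (𝕜 := 𝕜), inner_smul_right, ← inner_conj_symm, RCLike.conj_mul, norm_smul, hu]
    simp only [mul_one, RCLike.norm_conj]
    norm_cast
    ring
  have hcs : ‖⟪φ, w⟫_𝕜‖ ^ 2 ≤ ‖φ‖ ^ 2 * ‖w‖ ^ 2 := by
    rw [← mul_pow]
    exact pow_le_pow_left₀ (norm_nonneg _) (norm_inner_le_norm φ w) 2
  rw [hφw, hw] at hcs
  linarith

theorem norm_rankOne_sub_rankOne_of_inner_eq_zero {u φ : E} (hu : ‖u‖ = 1)
    (huφ : ⟪u, φ⟫_𝕜 = 0) : ‖rankOne 𝕜 φ u - rankOne 𝕜 u φ‖ = ‖φ‖ := by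
  have hφu : ⟪φ, u⟫_𝕜 = 0 := inner_eq_zero_symm.mp huφ
  apply le_antisymm
  · refine opNorm_le_bound _ (norm_nonneg φ) fun x ↦ ?_
    have hpyth : ‖⟪u, x⟫_𝕜 • φ - ⟪φ, x⟫_𝕜 • u‖ ^ 2 =
        ‖⟪u, x⟫_𝕜‖ ^ 2 * ‖φ‖ ^ 2 + ‖⟪φ, x⟫_𝕜‖ ^ 2 := by
      rw [norm_sub_sq (𝕜 := 𝕜), inner_smul_left, inner_smul_right, hφu]
      simp [norm_smul, hu, mul_pow]
    refine (pow_le_pow_iff_left₀ (norm_nonneg _) (by positivity) two_ne_zero).mp ?_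
    simpa [hpyth, mul_pow] using norm_inner_sq_mul_add_norm_inner_sq_le hu huφ x
  · calc ‖φ‖ = ‖(rankOne 𝕜 φ u - rankOne 𝕜 u φ) u‖ := by
          simp [hφu, inner_self_eq_norm_sq_to_K, hu]
      _ ≤ ‖rankOne 𝕜 φ u - rankOne 𝕜 u φ‖ := by
          simpa [hu] using le_opNorm (rankOne 𝕜 φ u - rankOne 𝕜 u φ) u

end Bessel

section SelfAdjoint

variable {E : Type*} [NormedAddCommGroup E] [InnerProductSpace ℂ E]

noncomputable def deviation (T : E →L[ℂ] E) (u : E) : E := T u - (re ⟪u, T u⟫_ℂ : ℂ) • u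

namespace ContinuousLinearMap

variable [CompleteSpace E] {T : E →L[ℂ] E} {u : E}

theorem IsSelfAdjoint.inner_deviation (hT : IsSelfAdjoint T) (hu : ‖u‖ = 1) :
    ⟪u, deviation T u⟫_ℂ = 0 := by
  have hreal : (re ⟪u, T u⟫_ℂ : ℂ) = ⟪u, T u⟫_ℂ := hT.isSymmetric.coe_re_inner_self_apply u
  rw [deviation, inner_sub_right, inner_smul_right, inner_self_eq_norm_sq_to_K, hu, hreal]
  simp

theorem IsSelfAdjoint.norm_deviation_sq (hT : IsSelfAdjoint T) (hu : ‖u‖ = 1) :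
    ‖deviation T u‖ ^ 2 = re ⟪u, T (T u)⟫_ℂ - (re ⟪u, T u⟫_ℂ) ^ 2 := by
  rw [deviation, norm_sub_sq (𝕜 := ℂ), inner_smul_right, norm_smul, hu, ← inner_re_symm,
    ← hT.isSymmetric.apply_clm, inner_self_eq_norm_sq, Complex.norm_real, Real.norm_eq_abs]
  simp only [re_to_complex, Complex.re_ofReal_mul, mul_one, sq_abs]
  ring

theorem IsSelfAdjoint.commutator_rankOne_self (hT : IsSelfAdjoint T) (u : E) :
    T * rankOne ℂ u u - rankOne ℂ u u * T =
      rankOne ℂ (deviation T u) u - rankOne ℂ u (deviation T u) := by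
  rw [mul_def, mul_def, comp_rankOne, rankOne_comp, hT.adjoint_eq, deviation]
  simp only [map_sub, map_smul, map_smulₛₗ, _root_.sub_apply, Complex.conj_ofReal]
  exact (sub_sub_sub_cancel_right _ _ _).symm

theorem IsSelfAdjoint.norm_commutator_rankOne_self (hT : IsSelfAdjoint T) (hu : ‖u‖ = 1) :
    ‖T * rankOne ℂ u u - rankOne ℂ u u * T‖ = ‖deviation T u‖ := by
  rw [hT.commutator_rankOne_self,
    norm_rankOne_sub_rankOne_of_inner_eq_zero hu (hT.inner_deviation hu)]

theorem IsSelfAdjoint.inner_commutator_commutator_rankOne_self (hT : IsSelfAdjoint T)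
    (hu : ‖u‖ = 1) :
    ⟪u, (T * (T * rankOne ℂ u u - rankOne ℂ u u * T) -
      (T * rankOne ℂ u u - rankOne ℂ u u * T) * T) u⟫_ℂ = 2 * ‖deviation T u‖ ^ 2 := by
  rw [hT.commutator_rankOne_self]
  set φ := deviation T u
  set C := rankOne ℂ φ u - rankOne ℂ u φ
  have huφ : ⟪u, φ⟫_ℂ = 0 := hT.inner_deviation hu
  have hφu : ⟪φ, u⟫_ℂ = 0 := inner_eq_zero_symm.mp huφ
  have hTu : T u = φ + (re ⟪u, T u⟫_ℂ : ℂ) • u := (sub_add_cancel _ _).symm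
  have hφTu : ⟪φ, T u⟫_ℂ = ‖φ‖ ^ 2 := by
    rw [hTu, inner_add_right, inner_smul_right, hφu, inner_self_eq_norm_sq_to_K]
    simp
  have hCu : C u = φ := by simp [C, hφu, inner_self_eq_norm_sq_to_K, hu]
  have hC (y : E) : ⟪u, C y⟫_ℂ = -⟪φ, y⟫_ℂ := by
    simp [C, huφ, inner_self_eq_norm_sq_to_K, hu]
  calc _ = ⟪u, T (C u)⟫_ℂ - ⟪u, C (T u)⟫_ℂ := by
        rw [_root_.sub_apply, mul_apply_eq_comp, mul_apply_eq_comp, inner_sub_right]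
    _ = ⟪T u, φ⟫_ℂ + ⟪φ, T u⟫_ℂ := by rw [hCu, hC, ← hT.isSymmetric.apply_clm, sub_neg_eq_add]
    _ = 2 * ‖φ‖ ^ 2 := by
        rw [← inner_conj_symm, hφTu]
        simp only [map_pow, Complex.conj_ofReal]
        ring

end ContinuousLinearMap

end SelfAdjoint

section EuclideanSpace

variable {𝕜 n : Type*} [RCLike 𝕜] [Fintype n]

theorem EuclideanSpace.norm_toLp_eq_one {x : n → 𝕜} (hx : star x ⬝ᵥ x = 1) :
    ‖toLp 2 x‖ = 1 := by
  have h : ((‖toLp 2 x‖ : ℝ) : 𝕜) ^ 2 = 1 := by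
    rw [← inner_self_eq_norm_sq_to_K, EuclideanSpace.inner_toLp_toLp, dotProduct_comm, hx]
  norm_cast at h
  exact (pow_eq_one_iff_of_nonneg (norm_nonneg _) two_ne_zero).mp h

theorem Matrix.toEuclideanCLM_vecMulVec_star [DecidableEq n] (x y : n → 𝕜) :
    toEuclideanCLM (𝕜 := 𝕜) (vecMulVec x (star y)) = rankOne 𝕜 (toLp 2 x) (toLp 2 y) := by
  ext1 v
  rw [← toLp_ofLp 2 v, toEuclideanCLM_toLp, vecMulVec_mulVec, rankOne_apply,
    EuclideanSpace.inner_toLp_toLp, dotProduct_comm]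
  simp

end EuclideanSpace

theorem expval_eq_re_inner {d : ℕ} (M : Matrix (Fin d) (Fin d) ℂ) (ψ : Fin d → ℂ) :
    expval M ψ = re ⟪toLp 2 ψ, toEuclideanCLM (𝕜 := ℂ) M (toLp 2 ψ)⟫_ℂ := by
  rw [expval, toEuclideanCLM_toLp, EuclideanSpace.inner_toLp_toLp, dotProduct_comm]
  rfl

theorem qfi_bound_tight_for_pure_states_general {d : ℕ}
    (ψ : Fin d → ℂ) (hψ : star ψ ⬝ᵥ ψ = 1)
    (A : Matrix (Fin d) (Fin d) ℂ) (hA : A.IsHermitian)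
    (B : Matrix (Fin d) (Fin d) ℂ)
    (hB : B = (-Complex.I) • (A * vecMulVec ψ (star ψ) - vecMulVec ψ (star ψ) * A)) :
    expval (Complex.I • (A * B - B * A)) ψ / ‖B‖ = 2 * Real.sqrt (variance A ψ) := by
  set T := toEuclideanCLM (𝕜 := ℂ) A
  set u : EuclideanSpace ℂ (Fin d) := toLp 2 ψ
  have hT : IsSelfAdjoint T := hA.isSelfAdjoint.map _
  have hu : ‖u‖ = 1 := EuclideanSpace.norm_toLp_eq_one hψ
  have hcomm : Complex.I • (A * B - B * A) =
      A * (A * vecMulVec ψ (star ψ) - vecMulVec ψ (star ψ) * A) -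
        (A * vecMulVec ψ (star ψ) - vecMulVec ψ (star ψ) * A) * A := by
    simp only [hB, mul_smul_comm, smul_mul_assoc, ← smul_sub, smul_smul]
    simp
  have hnum : expval (Complex.I • (A * B - B * A)) ψ = 2 * ‖deviation T u‖ ^ 2 := by
    rw [hcomm, expval_eq_re_inner]
    simp only [map_sub, map_mul, toEuclideanCLM_vecMulVec_star]
    rw [hT.inner_commutator_commutator_rankOne_self hu]
    norm_cast
  have hnorm : ‖B‖ = ‖deviation T u‖ := by
    rw [hB, ← l2_opNorm_toEuclideanCLM]
    simp only [map_smul, map_sub, map_mul, toEuclideanCLM_vecMulVec_star]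
    rw [norm_smul, hT.norm_commutator_rankOne_self hu]
    simp
  have hvar : variance A ψ = ‖deviation T u‖ ^ 2 := by
    rw [hT.norm_deviation_sq hu, variance, expval_eq_re_inner, expval_eq_re_inner, map_mul,
      mul_apply_eq_comp]
  rw [hnum, hnorm, hvar, Real.sqrt_sq (norm_nonneg _), mul_div_assoc, sq, mul_self_div_self]

/-- For `B = −i[A, |ψ⟩⟨ψ|]`, the lower bound `⟨i[A,B]⟩_ψ / ‖B‖` on
`√(F(ψ,A)) = 2√(Var_ψ(A))` is tight. -/
theorem qfi_bound_tight_for_pure_states {d : ℕ}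
    (ψ : Fin d → ℂ) (hψ : star ψ ⬝ᵥ ψ = 1)
    (A : Matrix (Fin d) (Fin d) ℂ) (hA : A.IsHermitian)
    (hVar : 0 < variance A ψ)
    (B : Matrix (Fin d) (Fin d) ℂ)
    (hB : B = (-Complex.I) • (A * vecMulVec ψ (star ψ) - vecMulVec ψ (star ψ) * A)) :
    expval (Complex.I • (A * B - B * A)) ψ / ‖B‖ = 2 * Real.sqrt (variance A ψ) :=
  qfi_bound_tight_for_pure_states_general ψ hψ A hA B hB
end

section
/- For every N ≥ 1 and all x, y ∈ {−1, 1}^N (deterministic local-variable assignments for two measurement settings at each of N sites), the two-body Bell expression of inequality (17) is nonnegative: (Σ_{i} x_i − Σ_{i} y_i) + (1/2) Σ_{i≠j} x_i x_j + Σ_{i≠j} x_i y_j + (1/2) Σ_{i≠j} y_i y_j + 2N ≥ 0, where the double sums run over all ordered pairs (i,j) with i ≠ j. -/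
/-!
Writing `S = ∑ xᵢ`, `T = ∑ yᵢ` and using `xᵢ² = yᵢ² = 1`, the off-diagonal sums are
`S² - N`, `S T - ∑ xᵢ yᵢ` and `T² - N`, so the Bell expression equals
`½ (S + T)² + ∑ᵢ (1 + xᵢ)(1 - yᵢ)`, a sum of nonnegative terms.
-/

open Finset

theorem sum_sum_ite_ne_mul {ι R : Type*} [Fintype ι] [DecidableEq ι] [CommRing R]
    (f g : ι → R) :
    ∑ i, ∑ j, (if i ≠ j then f i * g j else 0) = (∑ i, f i) * (∑ j, g j) - ∑ i, f i * g i := by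
  rw [sum_mul_sum, ← sum_sub_distrib]
  refine sum_congr rfl fun i _ => ?_
  rw [← sum_filter, filter_ne, sum_erase_eq_sub (mem_univ i)]

theorem sum_mul_self_of_eq_one_or_eq_neg_one {ι R : Type*} [Fintype ι] [Ring R] (x : ι → R)
    (hx : ∀ i, x i = 1 ∨ x i = -1) : ∑ i, x i * x i = Fintype.card ι := by
  have hsq : ∀ i, x i * x i = 1 := fun i => by rcases hx i with h | h <;> simp [h]
  simp [hsq]

theorem sum_one_add_mul_one_sub_nonneg {ι : Type*} [Fintype ι] (x y : ι → ℝ)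
    (hx : ∀ i, |x i| ≤ 1) (hy : ∀ i, |y i| ≤ 1) : 0 ≤ ∑ i, (1 + x i) * (1 - y i) :=
  sum_nonneg fun i _ => mul_nonneg (by linarith [neg_abs_le (x i), hx i])
    (by linarith [le_abs_self (y i), hy i])

theorem abs_le_one_of_eq_one_or_eq_neg_one {a : ℝ} (ha : a = 1 ∨ a = -1) : |a| ≤ 1 := by
  rcases ha with rfl | rfl <;> simp

theorem bell_ineq_local_bound_general (N : ℕ)
    (x y : Fin N → ℝ)
    (hx : ∀ i, x i = 1 ∨ x i = -1) (hy : ∀ i, y i = 1 ∨ y i = -1) :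
    0 ≤ (∑ i, x i - ∑ i, y i)
        + (1 / 2) * (∑ i, ∑ j, if i ≠ j then x i * x j else 0)
        + (∑ i, ∑ j, if i ≠ j then x i * y j else 0)
        + (1 / 2) * (∑ i, ∑ j, if i ≠ j then y i * y j else 0)
        + 2 * N := by
  have hsites := sum_one_add_mul_one_sub_nonneg x y
    (fun i => abs_le_one_of_eq_one_or_eq_neg_one (hx i))
    (fun i => abs_le_one_of_eq_one_or_eq_neg_one (hy i))
  have hexpand : ∑ i, (1 + x i) * (1 - y i) = N + ∑ i, x i - ∑ i, y i - ∑ i, x i * y i := by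
    simp only [add_mul, one_mul, mul_sub, mul_one, sum_add_distrib, sum_sub_distrib, sum_const,
      card_univ, Fintype.card_fin, nsmul_eq_mul]
    ring
  rw [sum_sum_ite_ne_mul, sum_sum_ite_ne_mul, sum_sum_ite_ne_mul,
    sum_mul_self_of_eq_one_or_eq_neg_one x hx, sum_mul_self_of_eq_one_or_eq_neg_one y hy,
    Fintype.card_fin]
  calc (0 : ℝ) ≤ 1 / 2 * (∑ i, x i + ∑ i, y i) ^ 2 + ∑ i, (1 + x i) * (1 - y i) :=
        add_nonneg (by positivity) hsites
    _ = _ := by rw [hexpand]; ring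

/-- Local (deterministic hidden-variable) bound of the two-setting two-body Bell
inequality `C₀ − C₁ + ½C₀₀ + C₀₁ + ½C₁₁ + 2N ≥ 0`. -/
theorem bell_ineq_local_bound (N : ℕ) (hN : 1 ≤ N)
    (x y : Fin N → ℝ)
    (hx : ∀ i, x i = 1 ∨ x i = -1) (hy : ∀ i, y i = 1 ∨ y i = -1) :
    0 ≤ (∑ i, x i - ∑ i, y i)
        + (1 / 2) * (∑ i, ∑ j, if i ≠ j then x i * x j else 0)
        + (∑ i, ∑ j, if i ≠ j then x i * y j else 0)
        + (1 / 2) * (∑ i, ∑ j, if i ≠ j then y i * y j else 0)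
        + 2 * N :=
  bell_ineq_local_bound_general N x y hx hy
end

section
/- Let z, C be real numbers with 0 ≤ z ≤ 1 and 0 ≤ C ≤ 1. Then there exists s ∈ [−1, 1] with (1 − z)s² − C s + z < 0 if and only if z < (1/2)(1 − √(1 − C²)). (Here z plays the role of the scaled second moment ζ² and s = sin φ the measurement-angle parameter; this is the optimization over the measurement angle φ that turns the Bell inequality (17) into the Bell-correlation witness ζ² ≥ (1/2)(1 − √(1 − C²)).) -/
/-!
Write `r = √(1 - C²)`. Since `(1 + r)(1 - r) = C²`, the quadratic `(1 + r)s² - 2Cs + (1 - r)` is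
`((1 + r)s - C)² / (1 + r) ≥ 0`; equivalently `(Cs - s²) / (1 - s²) ≤ (1 - r) / 2`, and
`(1 - z)s² - Cs + z = z(1 - s²) - (Cs - s²)` can only be negative when `z < (1 - r) / 2`.
Conversely, if `z < (1 - r) / 2` then `z < 1 / 2` and `4z(1 - z) < C²`, so the quadratic is
negative at its vertex `s = C / (2(1 - z))`, which lies in `[-1, 1]`.
-/

section

variable {C r : ℝ}

theorem one_add_mul_sub_eq_sq (hr : r ^ 2 = 1 - C ^ 2) (s : ℝ) :
    (1 + r) * ((1 - r) * (1 - s ^ 2) - 2 * (C * s - s ^ 2)) = ((1 + r) * s - C) ^ 2 := by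
  linear_combination -hr

theorem two_mul_sub_sq_le_one_sub_mul (hr0 : 0 ≤ r) (hr : r ^ 2 = 1 - C ^ 2) (s : ℝ) :
    2 * (C * s - s ^ 2) ≤ (1 - r) * (1 - s ^ 2) := by
  have h := (mul_nonneg_iff_of_pos_left (by linarith : (0 : ℝ) < 1 + r)).mp
    ((one_add_mul_sub_eq_sq hr s).symm ▸ sq_nonneg _)
  linarith

theorem lt_of_quadratic_neg (hr0 : 0 ≤ r) (hr : r ^ 2 = 1 - C ^ 2) {z s : ℝ} (hs : s ^ 2 ≤ 1)
    (hq : (1 - z) * s ^ 2 - C * s + z < 0) : 2 * z < 1 - r := by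
  have hneg : (1 - s ^ 2) * (2 * z - (1 - r)) < 0 := by
    nlinarith [two_mul_sub_sq_le_one_sub_mul hr0 hr s]
  linarith [neg_of_mul_neg_right hneg (by linarith)]

theorem four_mul_one_sub_lt_sq (hr0 : 0 ≤ r) (hr : r ^ 2 = 1 - C ^ 2) {z : ℝ}
    (hz : 2 * z < 1 - r) : 4 * z * (1 - z) < C ^ 2 := by
  have := pow_lt_pow_left₀ (by linarith : r < 1 - 2 * z) hr0 two_ne_zero
  nlinarith

end

theorem exists_quadratic_neg {z C : ℝ} (hz : z < 1 / 2) (hC : |C| ≤ 1)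
    (hdisc : 4 * z * (1 - z) < C ^ 2) :
    ∃ s ∈ Set.Icc (-1 : ℝ) 1, (1 - z) * s ^ 2 - C * s + z < 0 := by
  have h2z : 0 < 2 * (1 - z) := by linarith
  refine ⟨C / (2 * (1 - z)), abs_le.mp ?_, ?_⟩
  · rw [abs_div, abs_of_pos h2z, div_le_one h2z]
    linarith
  · have hvertex : 4 * (1 - z) * ((1 - z) * (C / (2 * (1 - z))) ^ 2 - C * (C / (2 * (1 - z))) + z)
        = 4 * z * (1 - z) - C ^ 2 := by
      have h1z : 1 - z ≠ 0 := by linarith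
      field_simp
      ring
    exact neg_of_mul_neg_right (hvertex ▸ sub_neg.mpr hdisc) (by linarith)

theorem witness_from_angle_optimization_general (z C : ℝ)
    (hC : 0 ≤ C) (hC1 : C ≤ 1) :
    (∃ s ∈ Set.Icc (-1 : ℝ) 1, (1 - z) * s ^ 2 - C * s + z < 0) ↔
      z < (1 / 2) * (1 - Real.sqrt (1 - C ^ 2)) := by
  have hr0 := Real.sqrt_nonneg (1 - C ^ 2)
  have hr : Real.sqrt (1 - C ^ 2) ^ 2 = 1 - C ^ 2 := Real.sq_sqrt (by nlinarith)
  have hCabs : |C| ≤ 1 := abs_le.mpr ⟨by linarith, hC1⟩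
  constructor
  · rintro ⟨s, hs, hq⟩
    have := lt_of_quadratic_neg hr0 hr ((sq_le_one_iff_abs_le_one s).mpr (abs_le.mpr hs)) hq
    linarith
  · intro hz
    exact exists_quadratic_neg (by linarith) hCabs (four_mul_one_sub_lt_sq hr0 hr (by linarith))

/-- Optimizing over the measurement angle: there exists `s = sin φ ∈ [−1,1]` with
`(1 − z)s² − Cs + z < 0` iff `z < (1/2)(1 − √(1 − C²))`. -/
theorem witness_from_angle_optimization (z C : ℝ)
    (hz : 0 ≤ z) (hz1 : z ≤ 1) (hC : 0 ≤ C) (hC1 : C ≤ 1) :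
    (∃ s ∈ Set.Icc (-1 : ℝ) 1, (1 - z) * s ^ 2 - C * s + z < 0) ↔
      z < (1 / 2) * (1 - Real.sqrt (1 - C ^ 2)) :=
  witness_from_angle_optimization_general z C hC hC1
end

section
/- Let ξ², C be real numbers with 1/4 < ξ² < 1/2 and 0 < C ≤ 1. Then ξ² C² < (1/2)(1 − √(1 − C²)) if and only if C² > 1 − (1/(2ξ²) − 1)². (Hence for 1/4 < ξ² < 1/2 the Bell-correlation witness is violated exactly when the contrast C exceeds the threshold √(1 − (1/(2ξ²) − 1)²).) -/
/-!
Write `s = √(1 - C²)`, so that `C² = 1 - s²` and `0 ≤ s < 1`. The witness inequality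
`ξ²(1 - s)(1 + s) < (1 - s)/2` becomes `s < 1/(2ξ²) - 1` after cancelling `1 - s > 0`, and since
`ξ² < 1/2` makes the right-hand side nonnegative, this is equivalent to `s² < (1/(2ξ²) - 1)²`.
-/

lemma mul_one_sub_sq_lt_half_mul_iff {a s : ℝ} (hs : s < 1) :
    a * (1 - s ^ 2) < 1 / 2 * (1 - s) ↔ a * (1 + s) < 1 / 2 := by
  have hfactor : a * (1 - s ^ 2) = (1 - s) * (a * (1 + s)) := by ring
  rw [hfactor, mul_comm (1 / 2 : ℝ), mul_lt_mul_iff_right₀ (sub_pos.mpr hs)]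

lemma mul_one_add_lt_half_iff {a s : ℝ} (ha : 0 < a) :
    a * (1 + s) < 1 / 2 ↔ s < 1 / (2 * a) - 1 := by
  rw [lt_sub_iff_add_lt, lt_div_iff₀ (by positivity : (0 : ℝ) < 2 * a)]
  constructor <;> intro h <;> linarith

lemma one_sub_sq_lt_one_sub_sq_iff {s t : ℝ} (hs : 0 ≤ s) (ht : 0 ≤ t) :
    1 - t ^ 2 < 1 - s ^ 2 ↔ s < t := by
  rw [sub_lt_sub_iff_left, sq_lt_sq₀ hs ht]

/-- For `1/4 < ξ² < 1/2` the Bell-correlation witness is violated iff the contrast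
exceeds the threshold: `ξ²C² < (1/2)(1 − √(1 − C²)) ↔ C² > 1 − (1/(2ξ²) − 1)²`. -/
theorem witness_violation_threshold (ξsq C : ℝ)
    (hξ : 1 / 4 < ξsq) (hξ2 : ξsq < 1 / 2) (hC : 0 < C) (hC1 : C ≤ 1) :
    ξsq * C ^ 2 < (1 / 2) * (1 - Real.sqrt (1 - C ^ 2)) ↔
      1 - (1 / (2 * ξsq) - 1) ^ 2 < C ^ 2 := by
  have hξ0 : 0 < ξsq := by linarith
  set s := Real.sqrt (1 - C ^ 2)
  have hC_sq : C ^ 2 = 1 - s ^ 2 := by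
    rw [Real.sq_sqrt (by nlinarith)]
    ring
  have hs_lt : s < 1 := (Real.sqrt_lt' one_pos).mpr (by linarith [pow_pos hC 2])
  have hthreshold : 0 ≤ 1 / (2 * ξsq) - 1 := by
    rw [sub_nonneg, le_div_iff₀ (by positivity)]
    linarith
  rw [hC_sq, mul_one_sub_sq_lt_half_mul_iff hs_lt, mul_one_add_lt_half_iff hξ0,
    one_sub_sq_lt_one_sub_sq_iff (Real.sqrt_nonneg _) hthreshold]
end

section
/- Let ξ², C be real numbers with 0 < ξ² ≤ 1/3 and 0 < C < 1. Then ξ² C² < 1 − C/artanh(C). (Hence for squeezing parameter ξ² ≤ 1/3 the multi-setting Bell-correlation witness ζ² ≥ 1 − C/artanh(C) is violated for every contrast C ∈ (0,1), where ζ² = ξ² C².) -/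
/-- Inverse hyperbolic tangent: `artanh x = (1/2) log((1+x)/(1−x))`. -/
noncomputable def artanh (x : ℝ) : ℝ := (1 / 2) * Real.log ((1 + x) / (1 - x))

/-!
For `0 < x < 1`, `artanh x = ∑ x^(2k+1)/(2k+1)` dominates `3x/(3 - x²) = ∑ x^(2k+1)/3^k` term by
term, since `2k + 1 ≤ 3^k`, with strict inequality at `k = 2`. Hence `x / artanh x < 1 - x²/3`,
and `ξ² C² ≤ C²/3` for `ξ² ≤ 1/3`.
-/

theorem hasSum_artanh {x : ℝ} (hx : |x| < 1) :
    HasSum (fun k : ℕ ↦ x ^ (2 * k + 1) / (2 * k + 1)) (artanh x) := by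
  obtain ⟨hx₁, hx₂⟩ := abs_lt.mp hx
  have h := (Real.hasSum_log_sub_log_of_abs_lt_one hx).mul_left (1 / 2)
  rw [artanh, Real.log_div (by linarith) (by linarith)]
  refine h.congr_fun fun k ↦ ?_
  field_simp

theorem hasSum_three_mul_div_three_sub_sq {x : ℝ} (hx : |x| < 1) :
    HasSum (fun k : ℕ ↦ x ^ (2 * k + 1) / 3 ^ k) (3 * x / (3 - x ^ 2)) := by
  have hr : x ^ 2 / 3 < 1 := by nlinarith [sq_abs x, abs_nonneg x]
  have h := (hasSum_geometric_of_lt_one (by positivity) hr).mul_left x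
  rw [show 3 * x / (3 - x ^ 2) = x * (1 - x ^ 2 / 3)⁻¹ by field_simp]
  refine h.congr_fun fun k ↦ ?_
  rw [div_pow, pow_succ, pow_mul]
  ring

theorem three_mul_div_three_sub_sq_lt_artanh {x : ℝ} (hx₀ : 0 < x) (hx₁ : x < 1) :
    3 * x / (3 - x ^ 2) < artanh x := by
  have hx : |x| < 1 := abs_lt.mpr ⟨by linarith, hx₁⟩
  refine hasSum_lt (i := 2) (fun k ↦ ?_) ?_
    (hasSum_three_mul_div_three_sub_sq hx) (hasSum_artanh hx)
  · have bernoulli := one_add_mul_le_pow (a := (2 : ℝ)) (by norm_num) k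
    norm_num at bernoulli
    gcongr
    linarith
  · norm_num
    gcongr
    norm_num

theorem div_artanh_lt_one_sub_sq_div_three {x : ℝ} (hx₀ : 0 < x) (hx₁ : x < 1) :
    x / artanh x < 1 - x ^ 2 / 3 := by
  have hpade : 0 < 3 * x / (3 - x ^ 2) := by
    have : 0 < 3 - x ^ 2 := by nlinarith
    positivity
  calc x / artanh x < x / (3 * x / (3 - x ^ 2)) :=
        div_lt_div_of_pos_left hx₀ hpade (three_mul_div_three_sub_sq_lt_artanh hx₀ hx₁)
    _ = 1 - x ^ 2 / 3 := by field_simp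

theorem multisetting_witness_violated_for_strong_squeezing_general (ξsq C : ℝ)
    (hξ3 : ξsq ≤ 1 / 3) (hC : 0 < C) (hC1 : C < 1) :
    ξsq * C ^ 2 < 1 - C / artanh C := by
  calc ξsq * C ^ 2 ≤ C ^ 2 / 3 := by nlinarith [sq_nonneg C]
    _ < 1 - C / artanh C := by linarith [div_artanh_lt_one_sub_sq_div_three hC hC1]

/-- For squeezing `ξ² ≤ 1/3` the multi-setting Bell-correlation witness is violated
for every contrast `C ∈ (0,1)`: `ξ²C² < 1 − C/artanh C`. -/
theorem multisetting_witness_violated_for_strong_squeezing (ξsq C : ℝ)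
    (hξ : 0 < ξsq) (hξ3 : ξsq ≤ 1 / 3) (hC : 0 < C) (hC1 : C < 1) :
    ξsq * C ^ 2 < 1 - C / artanh C :=
  multisetting_witness_violated_for_strong_squeezing_general ξsq C hξ3 hC hC1
end

section
/- Let ξ², C be real numbers with ξ² ≥ 1 and 0 < C < 1. Then ξ² C² ≥ 1 − C/artanh(C). (Hence violation of the multi-setting Bell-correlation witness ζ² ≥ 1 − C/artanh(C), with ζ² = ξ²C², requires squeezing ξ² < 1, i.e. a quantum Fisher information F(ρ, S_z) ≥ N/ξ² exceeding the separable-state bound N.) -/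
open Set

theorem artanh_eq_real_artanh {x : ℝ} (hx : x ∈ Icc (-1) 1) : artanh x = Real.artanh x :=
  (Real.artanh_eq_half_log hx).symm

namespace Real

theorem artanh_le_div_sqrt {x : ℝ} (hx : x ∈ Ico 0 1) : artanh x ≤ x / √(1 - x ^ 2) := by
  rw [← sinh_artanh ⟨by linarith [hx.1], hx.2⟩]
  exact self_le_sinh_iff.2 (artanh_nonneg hx.1)

theorem sqrt_one_sub_sq_le_div_artanh {x : ℝ} (hx : x ∈ Ioo 0 1) :
    √(1 - x ^ 2) ≤ x / artanh x := by
  have hsqrt : 0 < √(1 - x ^ 2) := sqrt_pos_of_pos (by nlinarith [hx.1, hx.2])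
  rw [le_div_iff₀ (artanh_pos hx), mul_comm, ← le_div_iff₀ hsqrt]
  exact artanh_le_div_sqrt (Ioo_subset_Ico_self hx)

theorem one_sub_sq_le_div_artanh {x : ℝ} (hx : x ∈ Ioo 0 1) : 1 - x ^ 2 ≤ x / artanh x := by
  have hsq : 0 ≤ 1 - x ^ 2 := by nlinarith [hx.1, hx.2]
  calc 1 - x ^ 2 ≤ √(1 - x ^ 2) := by
        rw [le_sqrt hsq hsq]
        nlinarith [sq_nonneg x]
    _ ≤ x / artanh x := sqrt_one_sub_sq_le_div_artanh hx

end Real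

/-- For squeezing `ξ² ≥ 1` the multi-setting Bell-correlation witness is never
violated: `ξ²C² ≥ 1 − C/artanh C`. -/
theorem multisetting_witness_needs_squeezing (ξsq C : ℝ)
    (hξ : 1 ≤ ξsq) (hC : 0 < C) (hC1 : C < 1) :
    1 - C / artanh C ≤ ξsq * C ^ 2 := by
  rw [artanh_eq_real_artanh ⟨by linarith, hC1.le⟩]
  have hwitness := Real.one_sub_sq_le_div_artanh ⟨hC, hC1⟩
  nlinarith [mul_le_mul_of_nonneg_right hξ (sq_nonneg C)]
end

section
/- Let ξ² be a real number with 1/3 < ξ² < 1. Then there exists C ∈ (0,1) with ξ² C² < 1 − C/artanh(C), and there also exists C ∈ (0,1) with ξ² C² ≥ 1 − C/artanh(C). (Hence for 1/3 < ξ² < 1 the multi-setting Bell-correlation witness is violated for some but not all values of the contrast: a minimal contrast C is needed.) -/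
open Set

namespace Real

theorem hasSum_artanh {x : ℝ} (hx : |x| < 1) :
    HasSum (fun k : ℕ => x ^ (2 * k + 1) / (2 * k + 1)) (artanh x) := by
  have hx' := abs_lt.mp hx
  rw [artanh_eq_half_log ⟨hx'.1.le, hx'.2.le⟩, log_div (by linarith) (by linarith)]
  have hterm : (fun k : ℕ => x ^ (2 * k + 1) / (2 * k + 1)) =
      fun k : ℕ => 1 / 2 * (2 * (1 / (2 * k + 1)) * x ^ (2 * k + 1)) := by
    funext k
    ring
  rw [hterm]
  exact (hasSum_log_sub_log_of_abs_lt_one hx).mul_left (1 / 2)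

theorem artanh_le_of_nonneg {x : ℝ} (h0 : 0 ≤ x) (h1 : x < 1) :
    artanh x ≤ 2 * x / 3 + x / (3 * (1 - x ^ 2)) := by
  have hx2 : x ^ 2 < 1 := by nlinarith
  have hodd : HasSum (fun k : ℕ => x ^ (2 * k + 1) / 3) (x / (3 * (1 - x ^ 2))) := by
    have hterm : (fun k : ℕ => x ^ (2 * k + 1) / 3) = fun k : ℕ => x / 3 * (x ^ 2) ^ k := by
      funext k
      ring
    rw [hterm, div_mul_eq_div_div, div_eq_mul_inv (x / 3)]
    exact (hasSum_geometric_of_lt_one (sq_nonneg x) hx2).mul_left (x / 3)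
  refine hasSum_le (fun k => ?_) (hasSum_artanh (abs_lt.mpr ⟨by linarith, h1⟩))
    ((hasSum_ite_eq 0 (2 * x / 3)).add hodd)
  rcases Nat.eq_zero_or_pos k with rfl | hk
  · norm_num
    linarith
  · have h3 : (3 : ℝ) ≤ 2 * k + 1 := by
      have : (1 : ℝ) ≤ k := by exact_mod_cast hk
      linarith
    simp only [hk.ne', if_false, zero_add]
    gcongr

theorem one_sub_div_artanh_le {x : ℝ} (hx : x ∈ Ioo 0 1) :
    1 - x / artanh x ≤ x ^ 2 / (3 - 2 * x ^ 2) := by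
  obtain ⟨h0, h1⟩ := hx
  have h1' : 1 - x ^ 2 ≠ 0 := by nlinarith
  have h3 : 3 - 2 * x ^ 2 ≠ 0 := by nlinarith
  have hsum : 2 * x / 3 + x / (3 * (1 - x ^ 2)) = x * (3 - 2 * x ^ 2) / (3 * (1 - x ^ 2)) := by
    field_simp
    ring
  calc 1 - x / artanh x ≤ 1 - x / (2 * x / 3 + x / (3 * (1 - x ^ 2))) := by
        gcongr
        exacts [artanh_pos ⟨h0, h1⟩, artanh_le_of_nonneg h0.le h1]
    _ = x ^ 2 / (3 - 2 * x ^ 2) := by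
        rw [hsum, div_div_eq_mul_div, mul_div_mul_left _ _ h0.ne', eq_div_iff h3, sub_mul,
          div_mul_cancel₀ _ h3]
        ring

end Real

theorem exists_mul_sq_lt_one_sub_div_artanh {a : ℝ} (ha0 : 0 ≤ a) (ha1 : a < 1) :
    ∃ C ∈ Ioo (0 : ℝ) 1, a * C ^ 2 < 1 - C / artanh C := by
  obtain ⟨C, ⟨hCneg, hC1⟩, hCt⟩ := Real.artanh_surjOn (mem_univ (1 - a)⁻¹)
  have hC0 : 0 < C := by
    by_contra! h
    linarith [Real.artanh_nonpos h, inv_pos.mpr (sub_pos.mpr ha1)]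
  refine ⟨C, ⟨hC0, hC1⟩, ?_⟩
  rw [artanh_eq_real_artanh ⟨hCneg.le, hC1.le⟩, hCt, div_inv_eq_mul]
  have hsq : C ^ 2 < 1 := by nlinarith
  nlinarith [mul_lt_mul_of_pos_right hC1 (sub_pos.mpr ha1)]

theorem exists_one_sub_div_artanh_le_mul_sq {a : ℝ} (ha : 1 / 3 < a) (ha1 : a < 1) :
    ∃ C ∈ Ioo (0 : ℝ) 1, 1 - C / artanh C ≤ a * C ^ 2 := by
  have hsq : (3 - a⁻¹) / 2 ∈ Ioo 0 1 := by
    have : 1 < a⁻¹ := (one_lt_inv₀ (by linarith)).mpr ha1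
    have : a⁻¹ < 3 := inv_lt_of_inv_lt₀ (by norm_num) (by linarith)
    constructor <;> linarith
  set C := √((3 - a⁻¹) / 2)
  have hC : C ∈ Ioo 0 1 :=
    ⟨Real.sqrt_pos.mpr hsq.1, (Real.sqrt_lt' one_pos).mpr (by simpa using hsq.2)⟩
  refine ⟨C, hC, ?_⟩
  rw [artanh_eq_real_artanh (Ioo_subset_Icc_self (Ioo_subset_Ioo_left (by norm_num) hC))]
  refine (Real.one_sub_div_artanh_le hC).trans_eq ?_
  rw [Real.sq_sqrt hsq.1.le]
  field_simp
  ring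

/-- For `1/3 < ξ² < 1` the multi-setting Bell-correlation witness is violated for
some but not all contrasts `C ∈ (0,1)`. -/
theorem multisetting_witness_minimal_contrast (ξsq : ℝ)
    (hξ : 1 / 3 < ξsq) (hξ1 : ξsq < 1) :
    (∃ C ∈ Set.Ioo (0 : ℝ) 1, ξsq * C ^ 2 < 1 - C / artanh C) ∧
      (∃ C ∈ Set.Ioo (0 : ℝ) 1, 1 - C / artanh C ≤ ξsq * C ^ 2) :=
  ⟨exists_mul_sq_lt_one_sub_div_artanh (by linarith) hξ1,
    exists_one_sub_div_artanh_le_mul_sq hξ hξ1⟩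
end
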